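/- Let M ≥ 1 be an integer, p ∈ [1,∞), and let u ∈ ℝ^M have nonnegative entries. Then ∫₀¹ π_M(u)(x)^p dx ≥ (2/(p+1)) · (1/M) ∑_{k=1}^M u_k^p = (2/(p+1)) · ∫₀¹ σ_M(u)(x)^p dx. In particular, on the nonnegative cone ℝ_+^M the L^p norms of σ_M(u) and π_M(u) are uniformly equivalent, with constants independent of M and u. -/

import Mathlib

open MeasureTheory Matrix Polynomial Set

noncomputable section

/-- Cyclic shift of an index of `Fin M` by an integer `k` (indices modulo `M`). -/
def cyc {M : ℕ} (i : Fin M) (k : ℤ) : Fin M :=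
  ⟨((((i : ℕ) : ℤ) + k) % (M : ℤ)).toNat, by
    have hM : 0 < M := i.pos
    have hM' : (0 : ℤ) < (M : ℤ) := by exact_mod_cast hM
    have h1 : 0 ≤ ((((i : ℕ) : ℤ) + k) % (M : ℤ)) := Int.emod_nonneg _ hM'.ne'
    have h2 : ((((i : ℕ) : ℤ) + k) % (M : ℤ)) < (M : ℤ) := Int.emod_lt_of_pos _ hM'
    omega⟩

/-- The periodic discrete Laplacian `Δ_M`, acting on vectors:
`(Δ_M u)_i = M² (u_{i+1} + u_{i-1} - 2 u_i)`, indices modulo `M`. -/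
def discLap (M : ℕ) (u : Fin M → ℝ) : Fin M → ℝ :=
  fun i => (M : ℝ) ^ 2 * (u (cyc i 1) + u (cyc i (-1)) - 2 * u i)

/-- The mean `[u]_M = (1/M) ∑ᵢ uᵢ`. -/
def meanM (M : ℕ) (u : Fin M → ℝ) : ℝ := (1 / (M : ℝ)) * ∑ i, u i

/-- The rescaled inner product `(u|v)_M = (1/M) ∑ᵢ uᵢ vᵢ`. -/
def innerM (M : ℕ) (u v : Fin M → ℝ) : ℝ := (1 / (M : ℝ)) * ∑ i, u i * v i

/-- The rescaled ℓ² norm `‖u‖_{2,M} = ((1/M) ∑ᵢ uᵢ²)^{1/2}`. -/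
def norm2M (M : ℕ) (u : Fin M → ℝ) : ℝ := Real.sqrt ((1 / (M : ℝ)) * ∑ i, (u i) ^ 2)

/-- Projection onto the mean-zero subspace: `ũ = u - [u]_M 𝟙`. -/
def tilde (M : ℕ) (u : Fin M → ℝ) : Fin M → ℝ := fun i => u i - meanM M u

open scoped Classical in
/-- The inverse of the discrete Laplacian on the mean-zero subspace:
for mean-zero `w`, the unique mean-zero `Φ` with `Δ_M Φ = w`. -/
def discLapInv (M : ℕ) (w : Fin M → ℝ) : Fin M → ℝ :=
  if h : ∃ Φ : Fin M → ℝ, meanM M Φ = 0 ∧ discLap M Φ = w then h.choose else 0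

/-- The discrete negative Sobolev norm `‖u‖_{-1,M} = (-(ũ|Δ_M⁻¹ũ)_M + [u]_M²)^{1/2}`. -/
def normNeg1M (M : ℕ) (u : Fin M → ℝ) : ℝ :=
  Real.sqrt (-(innerM M (tilde M u) (discLapInv M (tilde M u))) + (meanM M u) ^ 2)

/-- The matrix of the periodic discrete Laplacian `Δ_M`. -/
def discLapMatrix (M : ℕ) : Matrix (Fin M) (Fin M) ℝ :=
  fun i j => (M : ℝ) ^ 2 *
    ((if j = cyc i 1 then (1 : ℝ) else 0) + (if j = cyc i (-1) then 1 else 0)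
      - 2 * (if j = i then 1 else 0))

/-- The periodic adjacency matrix `J_M`. -/
def JMatrix (M : ℕ) : Matrix (Fin M) (Fin M) ℝ :=
  fun i j => (if j = cyc i 1 then (1 : ℝ) else 0) + (if j = cyc i (-1) then 1 else 0)

/-- The circulant matrix `B_M = (2/3) I + (1/6) J_M`. -/
def BMatrix (M : ℕ) : Matrix (Fin M) (Fin M) ℝ :=
  fun i j => (2 / 3) * (if j = i then (1 : ℝ) else 0) + (1 / 6) * JMatrix M i j

/-- The 1-periodic step reconstruction `σ_M(u)`, equal to `u_k` on `[(k-1)/M, k/M)`. -/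
def sigmaRec (M : ℕ) (u : Fin M → ℝ) (x : ℝ) : ℝ :=
  if h : 0 < M then u (cyc (⟨0, h⟩ : Fin M) ⌊(M : ℝ) * x⌋) else 0

/-- The 1-periodic continuous piecewise affine reconstruction `π_M(u)`, with
`π_M(u)(k/M) = u_k`, affine on each interval `[(k-1)/M, k/M]`. -/
def piRec (M : ℕ) (u : Fin M → ℝ) (x : ℝ) : ℝ :=
  if h : 0 < M then
    (1 - Int.fract ((M : ℝ) * x)) * u (cyc (⟨0, h⟩ : Fin M) (⌊(M : ℝ) * x⌋ - 1))
      + Int.fract ((M : ℝ) * x) * u (cyc (⟨0, h⟩ : Fin M) ⌊(M : ℝ) * x⌋)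
  else 0

/-- The a.e. derivative of `π_M(u)`: equal to `M (u_k - u_{k-1})` on `((k-1)/M, k/M)`. -/
def gDeriv (M : ℕ) (u : Fin M → ℝ) (x : ℝ) : ℝ :=
  if h : 0 < M then
    (M : ℝ) * (u (cyc (⟨0, h⟩ : Fin M) ⌊(M : ℝ) * x⌋)
      - u (cyc (⟨0, h⟩ : Fin M) (⌊(M : ℝ) * x⌋ - 1)))
  else 0

/-- The 1-periodic kernel `ρ_M`, equal to `M` on `[0, 1/M)` and `0` on `[1/M, 1)`. -/
def rhoM (M : ℕ) (y : ℝ) : ℝ := if Int.fract y < 1 / (M : ℝ) then (M : ℝ) else 0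

/-- The `k`-th Fourier coefficient `c_k(f) = ∫₀¹ f(x) e^{-2πikx} dx` of a 1-periodic
function. -/
def fCoeff (f : ℝ → ℝ) (k : ℤ) : ℂ :=
  ∫ x in (0 : ℝ)..1, (f x : ℂ) *
    Complex.exp (-(2 * (Real.pi : ℂ) * Complex.I * (k : ℂ) * (x : ℂ)))

/-- The `H^{-1}(𝕋)` norm `(∑_k |c_k(f)|² (1+k²)^{-1})^{1/2}`. -/
def Hm1Norm (f : ℝ → ℝ) : ℝ :=
  Real.sqrt (∑' k : ℤ, ‖fCoeff f k‖ ^ 2 * ((1 : ℝ) + (k : ℝ) ^ 2)⁻¹)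

/-- The `L²(𝕋)` norm `(∫₀¹ f²)^{1/2}`. -/
def L2Norm01 (f : ℝ → ℝ) : ℝ := Real.sqrt (∫ x in (0 : ℝ)..1, (f x) ^ 2)

end

lemma cyc_coe {M : ℕ} (i : Fin M) (k : ℤ) :
    (((cyc i k : Fin M) : ℕ) : ℤ) = (((i : ℕ) : ℤ) + k) % (M : ℤ) := by
  have hM' : (0 : ℤ) < (M : ℤ) := by exact_mod_cast i.pos
  simp only [cyc]
  exact Int.toNat_of_nonneg (Int.emod_nonneg _ hM'.ne')

lemma cyc_cyc {M : ℕ} (i : Fin M) (k l : ℤ) : cyc (cyc i k) l = cyc i (k + l) := by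
  apply Fin.ext
  have h : (((cyc (cyc i k) l : Fin M) : ℕ) : ℤ) = (((cyc i (k + l) : Fin M) : ℕ) : ℤ) := by
    rw [cyc_coe, cyc_coe, cyc_coe, Int.emod_add_emod, add_assoc]
  exact_mod_cast h

lemma cyc_zero {M : ℕ} (i : Fin M) : cyc i 0 = i := by
  apply Fin.ext
  have h : (((cyc i 0 : Fin M) : ℕ) : ℤ) = ((i : ℕ) : ℤ) := by
    rw [cyc_coe, add_zero]
    exact Int.emod_eq_of_lt (by positivity) (by exact_mod_cast i.isLt)
  exact_mod_cast h

lemma cyc_i0 {M : ℕ} (hM0 : 0 < M) (i : Fin M) :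
    cyc (⟨0, hM0⟩ : Fin M) ((i : ℕ) : ℤ) = i := by
  apply Fin.ext
  have h : (((cyc (⟨0, hM0⟩ : Fin M) ((i : ℕ) : ℤ) : Fin M) : ℕ) : ℤ) = ((i : ℕ) : ℤ) := by
    rw [cyc_coe]
    simp only [Fin.val_mk, Nat.cast_zero, zero_add]
    exact Int.emod_eq_of_lt (by positivity) (by exact_mod_cast i.isLt)
  exact_mod_cast h

def cycEquiv {M : ℕ} (m : ℤ) : Fin M ≃ Fin M where
  toFun i := cyc i m
  invFun i := cyc i (-m)
  left_inv i := by simp only []; rw [cyc_cyc, add_neg_cancel, cyc_zero]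
  right_inv i := by simp only []; rw [cyc_cyc, neg_add_cancel, cyc_zero]

lemma sum_cyc {M : ℕ} (hM0 : 0 < M) (m : ℤ) (f : Fin M → ℝ) :
    ∑ k ∈ Finset.range M, f (cyc (⟨0, hM0⟩ : Fin M) ((k : ℤ) + m)) = ∑ i, f i := by
  rw [← Fin.sum_univ_eq_sum_range (fun k => f (cyc (⟨0, hM0⟩ : Fin M) ((k : ℤ) + m)))]
  have hic : ∀ i : Fin M, cyc (⟨0, hM0⟩ : Fin M) (((i : ℕ) : ℤ) + m) = cyc i m := by
    intro i
    rw [← cyc_cyc, cyc_i0 hM0]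
  simp_rw [hic]
  exact Equiv.sum_comp (cycEquiv m) f

lemma rpow_superadd {p x y : ℝ} (hp : 1 ≤ p) (hx : 0 ≤ x) (hy : 0 ≤ y) :
    x ^ p + y ^ p ≤ (x + y) ^ p := by
  have h := NNReal.add_rpow_le_rpow_add x.toNNReal y.toNNReal hp
  rw [← NNReal.coe_le_coe] at h
  push_cast at h
  rwa [Real.coe_toNNReal x hx, Real.coe_toNNReal y hy] at h

lemma piece_eq {f g : ℝ → ℝ} {a b : ℝ} (hab : a ≤ b) (hg : Continuous g)
    (hfg : ∀ x ∈ Set.Ioo a b, f x = g x) :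
    IntervalIntegrable f volume a b ∧ (∫ x in a..b, f x) = ∫ x in a..b, g x := by
  have hres : (volume : Measure ℝ).restrict (Set.Ioc a b) = volume.restrict (Set.Ioo a b) :=
    (Measure.restrict_congr_set Ioo_ae_eq_Ioc).symm
  have hae : f =ᵐ[volume.restrict (Set.Ioc a b)] g := by
    rw [hres]
    exact (ae_restrict_iff' measurableSet_Ioo).2 (Filter.Eventually.of_forall hfg)
  have hgi : IntervalIntegrable g volume a b := hg.intervalIntegrable a b
  constructor
  · rw [intervalIntegrable_iff_integrableOn_Ioc_of_le hab] at hgi ⊢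
    exact hgi.congr_fun_ae hae.symm
  · apply intervalIntegral.integral_congr_ae
    have hb : ∀ᵐ x : ℝ, x ≠ b := by
      refine ae_iff.2 ?_
      simpa using measure_singleton b
    filter_upwards [hb] with x hx hxI
    rw [Set.uIoc_of_le hab] at hxI
    exact hfg x ⟨hxI.1, lt_of_le_of_ne hxI.2 hx⟩

lemma int_rpow_01 {p : ℝ} (hp : 1 ≤ p) : (∫ t in (0:ℝ)..1, t ^ p) = 1 / (p + 1) := by
  rw [integral_rpow (Or.inl (by linarith))]
  rw [Real.one_rpow, Real.zero_rpow (by linarith : p + 1 ≠ 0)]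
  ring

lemma int_rpow_01' {p : ℝ} (hp : 1 ≤ p) : (∫ t in (0:ℝ)..1, (1 - t) ^ p) = 1 / (p + 1) := by
  have h := intervalIntegral.integral_comp_sub_left (a := (0:ℝ)) (b := 1) (fun t => t ^ p) 1
  simp only [sub_zero, sub_self] at h
  rw [h, int_rpow_01 hp]

lemma key01 {p : ℝ} (hp : 1 ≤ p) (A B : ℝ) (hA : 0 ≤ A) (hB : 0 ≤ B) :
    (A ^ p + B ^ p) / (p + 1) ≤ ∫ t in (0:ℝ)..1, ((1 - t) * A + t * B) ^ p := by
  have hp0 : (0:ℝ) ≤ p := le_trans zero_le_one hp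
  have hc : Continuous fun t : ℝ => ((1 - t) * A + t * B) ^ p :=
    (Real.continuous_rpow_const hp0).comp (by continuity)
  have hc1 : Continuous fun t : ℝ => (1 - t) ^ p :=
    (Real.continuous_rpow_const hp0).comp (by continuity)
  have hc2 : Continuous fun t : ℝ => (1 - t) ^ p * A ^ p + t ^ p * B ^ p :=
    (hc1.mul continuous_const).add ((Real.continuous_rpow_const hp0).mul continuous_const)
  have hle : ∀ t ∈ Set.Icc (0:ℝ) 1,
      (1 - t) ^ p * A ^ p + t ^ p * B ^ p ≤ ((1 - t) * A + t * B) ^ p := by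
    intro t ht
    rw [← Real.mul_rpow (by linarith [ht.2]) hA, ← Real.mul_rpow ht.1 hB]
    exact rpow_superadd hp (mul_nonneg (by linarith [ht.2]) hA) (mul_nonneg ht.1 hB)
  have hmono := intervalIntegral.integral_mono_on (μ := volume) (by norm_num)
    (hc2.intervalIntegrable 0 1) (hc.intervalIntegrable 0 1) hle
  have hval : (∫ t in (0:ℝ)..1, ((1 - t) ^ p * A ^ p + t ^ p * B ^ p))
      = (A ^ p + B ^ p) / (p + 1) := by
    rw [intervalIntegral.integral_add (f := fun t => (1 - t) ^ p * A ^ p) (g := fun t => t ^ p * B ^ p) ((hc1.mul continuous_const).intervalIntegrable 0 1)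
      (((Real.continuous_rpow_const hp0).mul continuous_const).intervalIntegrable 0 1),
      intervalIntegral.integral_mul_const, intervalIntegral.integral_mul_const,
      int_rpow_01 hp, int_rpow_01' hp]
    ring
  linarith [hmono, hval.ge, hval.le]

lemma floor_piece {M : ℕ} (hM0 : 0 < M) (k : ℕ) {x : ℝ}
    (hx : x ∈ Set.Ioo ((k : ℝ) / M) (((k : ℝ) + 1) / M)) : ⌊(M : ℝ) * x⌋ = (k : ℤ) := by
  have hMR : (0:ℝ) < M := by exact_mod_cast hM0
  have h1 : (k : ℝ) < x * M := (div_lt_iff₀ hMR).1 hx.1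
  have h2 : x * M < (k : ℝ) + 1 := (lt_div_iff₀ hMR).1 hx.2
  rw [Int.floor_eq_iff]
  constructor
  · push_cast; nlinarith
  · push_cast; nlinarith

/-- reverse `L^p` comparison of the two reconstructions on the
nonnegative cone (Proposition 4.3 / `prop:normlp`, second part). -/
theorem reconstruction_reverse_Lp (M : ℕ) (hM : 1 ≤ M) (p : ℝ) (hp : 1 ≤ p)
    (u : Fin M → ℝ) (hu : ∀ i, 0 ≤ u i) :
    (2 / (p + 1)) * ((1 / (M : ℝ)) * ∑ k, u k ^ p) ≤ (∫ x in (0 : ℝ)..1, piRec M u x ^ p) ∧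
    (1 / (M : ℝ)) * ∑ k, u k ^ p = ∫ x in (0 : ℝ)..1, sigmaRec M u x ^ p := by
  have hM0 : 0 < M := hM
  have hMR : (0:ℝ) < M := by exact_mod_cast hM0
  have hp1 : (0:ℝ) < p + 1 := by linarith
  have hp0 : (0:ℝ) ≤ p := by linarith
  set a : ℕ → ℝ := fun k => (k : ℝ) / M with ha
  have ha_succ : ∀ k : ℕ, a (k + 1) = ((k : ℝ) + 1) / M := by
    intro k; simp only [ha]; push_cast; ring
  have hale : ∀ k : ℕ, a k ≤ a (k + 1) := by
    intro k
    rw [ha_succ]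
    simp only [ha]
    gcongr
    linarith
  have ha0 : a 0 = 0 := by simp [ha]
  have haM : a M = 1 := by
    simp only [ha]
    exact div_self hMR.ne'
  -- sigma pieces
  have hsig : ∀ k : ℕ, k < M →
      IntervalIntegrable (fun x => sigmaRec M u x ^ p) volume (a k) (a (k + 1)) ∧
      (∫ x in a k..a (k + 1), sigmaRec M u x ^ p)
        = (1 / (M : ℝ)) * u (cyc (⟨0, hM0⟩ : Fin M) (k : ℤ)) ^ p := by
    intro k hk
    have hfg : ∀ x ∈ Set.Ioo (a k) (a (k + 1)),
        sigmaRec M u x ^ p = u (cyc (⟨0, hM0⟩ : Fin M) (k : ℤ)) ^ p := by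
      intro x hx
      rw [ha_succ] at hx
      have hf := floor_piece hM0 k hx
      simp only [sigmaRec, dif_pos hM0, hf]
    obtain ⟨hint, heq⟩ := piece_eq (hale k) continuous_const hfg
    refine ⟨hint, ?_⟩
    rw [heq, intervalIntegral.integral_const, ha_succ, smul_eq_mul]
    congr 1
    simp only [ha]
    field_simp
    ring
  have hsum_sig := intervalIntegral.sum_integral_adjacent_intervals
    (a := a) (μ := volume) (n := M) (fun k hk => (hsig k hk).1)
  rw [ha0, haM] at hsum_sig
  have hsig_total : (∫ x in (0:ℝ)..1, sigmaRec M u x ^ p) = (1 / (M : ℝ)) * ∑ i, u i ^ p := by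
    rw [← hsum_sig,
      Finset.sum_congr rfl (fun k hk => (hsig k (Finset.mem_range.1 hk)).2),
      ← Finset.mul_sum]
    congr 1
    have h2 := sum_cyc hM0 0 (fun i => u i ^ p)
    simpa using h2
  -- pi pieces
  have hpi : ∀ k : ℕ, k < M →
      IntervalIntegrable (fun x => piRec M u x ^ p) volume (a k) (a (k + 1)) ∧
      (1 / (M : ℝ)) * ((u (cyc (⟨0, hM0⟩ : Fin M) ((k : ℤ) - 1)) ^ p
          + u (cyc (⟨0, hM0⟩ : Fin M) (k : ℤ)) ^ p) / (p + 1))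
        ≤ ∫ x in a k..a (k + 1), piRec M u x ^ p := by
    intro k hk
    set A := u (cyc (⟨0, hM0⟩ : Fin M) ((k : ℤ) - 1)) with hA
    set B := u (cyc (⟨0, hM0⟩ : Fin M) (k : ℤ)) with hB
    set F : ℝ → ℝ := fun t => ((1 - t) * A + t * B) ^ p with hF
    have hFc : Continuous F := (Real.continuous_rpow_const hp0).comp (by continuity)
    have hg : Continuous fun x : ℝ => F ((M : ℝ) * x - (k : ℝ)) := hFc.comp (by continuity)
    have hfg : ∀ x ∈ Set.Ioo (a k) (a (k + 1)),
        piRec M u x ^ p = F ((M : ℝ) * x - (k : ℝ)) := by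
      intro x hx
      rw [ha_succ] at hx
      have hf := floor_piece hM0 k hx
      have hfr : Int.fract ((M : ℝ) * x) = (M : ℝ) * x - (k : ℝ) := by
        rw [Int.fract, hf]
        push_cast
        ring
      simp only [piRec, dif_pos hM0, hf, hfr, hF, ← hA, ← hB]
    obtain ⟨hint, heq⟩ := piece_eq (hale k) hg hfg
    refine ⟨hint, ?_⟩
    rw [heq]
    have hcv := intervalIntegral.integral_comp_mul_sub (a := a k) (b := a (k + 1)) F
      hMR.ne' (k : ℝ)
    have e0 : (M : ℝ) * a k - (k : ℝ) = 0 := by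
      simp only [ha]; field_simp; ring
    have e1 : (M : ℝ) * a (k + 1) - (k : ℝ) = 1 := by
      rw [ha_succ]; field_simp; ring
    rw [e0, e1] at hcv
    rw [hcv, smul_eq_mul]
    have hK := key01 hp A B (hu _) (hu _)
    calc (1 / (M : ℝ)) * ((A ^ p + B ^ p) / (p + 1))
        ≤ (1 / (M : ℝ)) * ∫ t in (0:ℝ)..1, F t := by
          apply mul_le_mul_of_nonneg_left _ (by positivity)
          simpa [hF] using hK
      _ = (M : ℝ)⁻¹ * ∫ t in (0:ℝ)..1, F t := by rw [one_div]
  have hsum_pi := intervalIntegral.sum_integral_adjacent_intervals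
    (a := a) (μ := volume) (n := M) (fun k hk => (hpi k hk).1)
  rw [ha0, haM] at hsum_pi
  have hge : ∑ k ∈ Finset.range M, (1 / (M : ℝ)) * ((u (cyc (⟨0, hM0⟩ : Fin M) ((k : ℤ) - 1)) ^ p
      + u (cyc (⟨0, hM0⟩ : Fin M) (k : ℤ)) ^ p) / (p + 1))
      ≤ ∫ x in (0:ℝ)..1, piRec M u x ^ p := by
    rw [← hsum_pi]
    exact Finset.sum_le_sum (fun k hk => (hpi k (Finset.mem_range.1 hk)).2)
  have hsum_eval : ∑ k ∈ Finset.range M, (1 / (M : ℝ)) * ((u (cyc (⟨0, hM0⟩ : Fin M) ((k : ℤ) - 1)) ^ p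
      + u (cyc (⟨0, hM0⟩ : Fin M) (k : ℤ)) ^ p) / (p + 1))
      = (2 / (p + 1)) * ((1 / (M : ℝ)) * ∑ i, u i ^ p) := by
    rw [← Finset.mul_sum, ← Finset.sum_div, Finset.sum_add_distrib]
    have h1 := sum_cyc hM0 (-1) (fun i => u i ^ p)
    have h2 := sum_cyc hM0 0 (fun i => u i ^ p)
    simp only [add_zero] at h2
    have h1' : ∑ k ∈ Finset.range M, u (cyc (⟨0, hM0⟩ : Fin M) ((k : ℤ) - 1)) ^ p
        = ∑ i, u i ^ p := by
      simpa [sub_eq_add_neg] using h1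
    rw [h1', h2]
    ring
  exact ⟨hsum_eval ▸ hge, hsig_total.symm⟩
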